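/- In type D_4 (Δ = {±e_i±e_j : i≠j} ⊆ ℝ⁴, |Δ| = 24), let λ = φ_1 + φ_3 = e_1 − e_4 + φ_4 where φ_4 = (1/2)(e_1+e_2+e_3+e_4), Λ = Wλ (so |Λ| = 2^{r−1}·r = 32), and H = {x ∈ ℝ⁴ : x₁+x₂+x₃+x₄ = 0}. Then |Δ ∩ H| = 12, |Λ ∩ H| = 8, and |Λ \ H| = 24 > |Δ \ H| + 6. -/

import Mathlib

open Set

noncomputable section

/-- The `i`-th standard basis vector of ℝ^r. -/
def eV (r : ℕ) (i : Fin r) : EuclideanSpace ℝ (Fin r) := EuclideanSpace.single i 1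

/-- The root system of type D_r: Δ = {±e_i ± e_j : i ≠ j}. -/
def rootsD (r : ℕ) : Set (EuclideanSpace ℝ (Fin r)) :=
  {v | ∃ i j, i ≠ j ∧ ∃ s t : ℝ, (s = 1 ∨ s = -1) ∧ (t = 1 ∨ t = -1) ∧
      v = s • eV r i + t • eV r j}

/-- The orbit of a vector of ℝ^r under the group of permutations combined with
even sign changes of the coordinates (the Weyl group of type D_r). -/
def evenSignedPermOrbit (r : ℕ) (v : EuclideanSpace ℝ (Fin r)) :
    Set (EuclideanSpace ℝ (Fin r)) :=
  {y | ∃ (σ : Equiv.Perm (Fin r)) (ε : Fin r → ℝ),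
    (∀ i, ε i = 1 ∨ ε i = -1) ∧ (∏ i, ε i) = 1 ∧ ∀ i, y i = ε i * v (σ i)}

/-- λ = φ₁ + φ₃ = (3/2, 1/2, 1/2, −1/2) in type D₄. -/
def lamD4 : EuclideanSpace ℝ (Fin 4) :=
  WithLp.toLp 2 (![3 / 2, 1 / 2, 1 / 2, -(1 / 2)] : Fin 4 → ℝ)

/-- Λ = Wλ in type D₄, a set of 32 vectors. -/
def LamD4 : Set (EuclideanSpace ℝ (Fin 4)) := evenSignedPermOrbit 4 lamD4

/-- The hyperplane H = {x ∈ ℝ⁴ : x₁ + x₂ + x₃ + x₄ = 0}. -/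
def HD4 : Set (EuclideanSpace ℝ (Fin 4)) := {x | x 0 + x 1 + x 2 + x 3 = 0}

/-! Both `Δ` and `Λ = Wλ` lie in `½ ℤ⁴`. Doubling identifies them with explicit finite sets of
integer vectors, indexed exactly as in their definitions (pairs of distinct indices with two
signs; permutations with an even sign pattern), and turns membership in `H` into the integer
condition `q₀ + q₁ + q₂ + q₃ = 0`. The four counts are then finite computations. -/

def boolSign (b : Bool) : ℤ := if b then 1 else -1

lemma exists_boolSign_eq {x : ℝ} (hx : x = 1 ∨ x = -1) : ∃ b, (boolSign b : ℝ) = x := by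
  rcases hx with rfl | rfl
  exacts [⟨true, by simp [boolSign]⟩, ⟨false, by simp [boolSign]⟩]

lemma boolSign_eq_one_or_neg_one (b : Bool) : (boolSign b : ℝ) = 1 ∨ (boolSign b : ℝ) = -1 := by
  cases b <;> simp [boolSign]

def halfVec (r : ℕ) : (Fin r → ℤ) →+ EuclideanSpace ℝ (Fin r) where
  toFun q := WithLp.toLp 2 fun i => (q i : ℝ) / 2
  map_zero' := by ext; simp
  map_add' a b := by ext; simp [add_div]

@[simp]
lemma halfVec_apply (r : ℕ) (q : Fin r → ℤ) (i : Fin r) : halfVec r q i = (q i : ℝ) / 2 := rfl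

lemma halfVec_injective (r : ℕ) : Function.Injective (halfVec r) := by
  intro a b h
  funext i
  have h' : (a i : ℝ) / 2 = b i / 2 := congrArg (· i) h
  exact_mod_cast (div_left_inj' two_ne_zero).1 h'

lemma halfVec_single (r : ℕ) (i : Fin r) : halfVec r (Pi.single i 2) = eV r i := by
  ext k
  rcases eq_or_ne k i with rfl | hk <;> simp [eV, *]

def rootsFinset (r : ℕ) : Finset (Fin r → ℤ) :=
  (Finset.univ.filter fun p : Fin r × Fin r × Bool × Bool => p.1 ≠ p.2.1).image
    fun p => boolSign p.2.2.1 • Pi.single p.1 2 + boolSign p.2.2.2 • Pi.single p.2.1 2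

lemma rootsD_eq_image (r : ℕ) : rootsD r = halfVec r '' rootsFinset r := by
  have key : ∀ i j s t, halfVec r (boolSign s • Pi.single i 2 + boolSign t • Pi.single j 2) =
      (boolSign s : ℝ) • eV r i + (boolSign t : ℝ) • eV r j := by
    intro i j s t
    simp only [map_add, map_zsmul, halfVec_single, Int.cast_smul_eq_zsmul]
  ext x
  simp only [rootsFinset, Finset.coe_image, Finset.coe_filter, Set.image_image, Set.mem_image]
  constructor
  · rintro ⟨i, j, hij, s, t, hs, ht, rfl⟩
    obtain ⟨bs, rfl⟩ := exists_boolSign_eq hs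
    obtain ⟨bt, rfl⟩ := exists_boolSign_eq ht
    exact ⟨(i, j, bs, bt), by simpa using hij, key i j bs bt⟩
  · rintro ⟨⟨i, j, s, t⟩, hij, rfl⟩
    exact ⟨i, j, by simpa using hij, _, _, boolSign_eq_one_or_neg_one s,
      boolSign_eq_one_or_neg_one t, key i j s t⟩

def evenSignedPerms (r : ℕ) (v : Fin r → ℤ) : Finset (Fin r → ℤ) :=
  (Finset.univ.filter fun p : Equiv.Perm (Fin r) × (Fin r → Bool) =>
      ∏ i, boolSign (p.2 i) = 1).image
    fun p i => boolSign (p.2 i) * v (p.1 i)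

lemma evenSignedPermOrbit_halfVec (r : ℕ) (v : Fin r → ℤ) :
    evenSignedPermOrbit r (halfVec r v) = halfVec r '' evenSignedPerms r v := by
  have prod_cast : ∀ b : Fin r → Bool,
      ∏ i, (boolSign (b i) : ℝ) = 1 ↔ ∏ i, boolSign (b i) = 1 := by
    intro b
    norm_cast
  ext x
  simp only [evenSignedPerms, Finset.coe_image, Finset.coe_filter, Set.image_image,
    Set.mem_image]
  constructor
  · rintro ⟨σ, ε, hε, hprod, hx⟩
    choose b hb using fun i => exists_boolSign_eq (hε i)
    refine ⟨(σ, b), ?_, ?_⟩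
    · simpa [← prod_cast, hb] using hprod
    · ext i
      simp [hx, hb, mul_div_assoc]
  · rintro ⟨⟨σ, b⟩, hprod, rfl⟩
    refine ⟨σ, fun i => boolSign (b i), fun i => boolSign_eq_one_or_neg_one (b i),
      (prod_cast b).2 (by simpa using hprod), fun i => ?_⟩
    simp [mul_div_assoc]

lemma lamD4_eq_halfVec : lamD4 = halfVec 4 ![3, 1, 1, -1] := by
  ext i
  fin_cases i <;> norm_num [lamD4]

lemma halfVec_mem_HD4_iff (q : Fin 4 → ℤ) : halfVec 4 q ∈ HD4 ↔ q 0 + q 1 + q 2 + q 3 = 0 := by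
  have hsum : halfVec 4 q 0 + halfVec 4 q 1 + halfVec 4 q 2 + halfVec 4 q 3 =
      ((q 0 + q 1 + q 2 + q 3 : ℤ) : ℝ) / 2 := by
    simp only [halfVec_apply]
    push_cast
    ring
  rw [HD4, Set.mem_ofPred_eq, hsum, div_eq_zero_iff]
  simp only [two_ne_zero, or_false, Int.cast_eq_zero]

section Counting

variable {α β : Type*} {f : α → β} {S : Set β} {p : α → Prop} [DecidablePred p]

lemma ncard_image_inter_eq_card_filter (hf : Function.Injective f) (F : Finset α)
    (hp : ∀ a, f a ∈ S ↔ p a) : (f '' F ∩ S).ncard = (F.filter p).card := by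
  rw [← Set.image_inter_preimage, Set.ncard_image_of_injective _ hf, ← Set.ncard_coe_finset]
  congr 1
  ext a
  simp [hp]

lemma ncard_image_sdiff_eq_card_filter (hf : Function.Injective f) (F : Finset α)
    (hp : ∀ a, f a ∈ S ↔ p a) : (f '' F \ S).ncard = (F.filter (¬ p ·)).card := by
  rw [← Set.image_sdiff_preimage, Set.ncard_image_of_injective _ hf, ← Set.ncard_coe_finset]
  congr 1
  ext a
  simp [hp]

end Counting

lemma card_rootsFinset_filter_sum_eq_zero :
    ((rootsFinset 4).filter fun q => q 0 + q 1 + q 2 + q 3 = 0).card = 12 := by decide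

lemma card_rootsFinset_filter_sum_ne_zero :
    ((rootsFinset 4).filter fun q => ¬ q 0 + q 1 + q 2 + q 3 = 0).card = 12 := by decide

set_option maxRecDepth 10000 in
lemma card_evenSignedPerms_filter_sum_eq_zero :
    ((evenSignedPerms 4 ![3, 1, 1, -1]).filter fun q => q 0 + q 1 + q 2 + q 3 = 0).card = 8 := by
  decide

set_option maxRecDepth 10000 in
lemma card_evenSignedPerms_filter_sum_ne_zero :
    ((evenSignedPerms 4 ![3, 1, 1, -1]).filter fun q => ¬ q 0 + q 1 + q 2 + q 3 = 0).card = 24 := by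
  decide

/-- in type D₄ with λ = φ₁ + φ₃ and H = {x₁+x₂+x₃+x₄ = 0}:
|Δ ∩ H| = 12, |Λ ∩ H| = 8, and |Λ \ H| = 24 > |Δ \ H| + 6. -/
theorem stmt_16 :
    (rootsD 4 ∩ HD4).ncard = 12 ∧
    (LamD4 ∩ HD4).ncard = 8 ∧
    (LamD4 \ HD4).ncard = 24 ∧
    (rootsD 4 \ HD4).ncard + 6 < (LamD4 \ HD4).ncard := by
  have hinj := halfVec_injective 4
  rw [LamD4, lamD4_eq_halfVec, evenSignedPermOrbit_halfVec, rootsD_eq_image,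
    ncard_image_inter_eq_card_filter hinj _ halfVec_mem_HD4_iff,
    ncard_image_inter_eq_card_filter hinj _ halfVec_mem_HD4_iff,
    ncard_image_sdiff_eq_card_filter hinj _ halfVec_mem_HD4_iff,
    ncard_image_sdiff_eq_card_filter hinj _ halfVec_mem_HD4_iff,
    card_rootsFinset_filter_sum_eq_zero, card_rootsFinset_filter_sum_ne_zero,
    card_evenSignedPerms_filter_sum_eq_zero, card_evenSignedPerms_filter_sum_ne_zero]
  norm_num

end
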